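/- Let τ ∈ S_{2n} be the fixed-point-free involution i ↦ i±n, and let B_n~ be the set of σ ∈ S_{2n} with τστ⁻¹ = σ⁻¹ whose cycle decomposition has no τ-self-symmetric cycles. Then B_n~ is invariant under conjugation by the centralizer B_n of τ, and for a partition λ of n, the subset B_λ~ of elements of B_n~ whose cycles form s pairs of τ-symmetric cycles of lengths λ₁,…,λ_s is a single B_n-conjugacy orbit. -/

import Mathlib

set_option linter.unnecessarySeqFocus false

open Equiv Equiv.Perm

/-- The fixed-point-free involution `τ = (1,n+1)(2,n+2)⋯(n,2n)` of `Fin (2n)`,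
sending `i ↦ i+n` for `i ≤ n` and `i ↦ i−n` for `i > n` (0-indexed). -/
def tau (n : ℕ) : Equiv.Perm (Fin (2 * n)) where
  toFun i := if h : (i : ℕ) < n then ⟨i + n, by omega⟩ else ⟨i - n, by have := i.isLt; omega⟩
  invFun i := if h : (i : ℕ) < n then ⟨i + n, by omega⟩ else ⟨i - n, by have := i.isLt; omega⟩
  left_inv := by
    rintro ⟨v, hv⟩
    by_cases h : v < n <;> simp [h] <;> split <;> (try omega) <;> (apply Fin.ext; simp <;> omega)
  right_inv := by
    rintro ⟨v, hv⟩
    by_cases h : v < n <;> simp [h] <;> split <;> (try omega) <;> (apply Fin.ext; simp <;> omega)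

/-- `σ ∈ Bₙ~`: `τστ⁻¹ = σ⁻¹` and the cycle decomposition of `σ` has no
`τ`-self-symmetric cycles. -/
def TwistedNoSelfSym (n : ℕ) (σ : Equiv.Perm (Fin (2 * n))) : Prop :=
  tau n * σ * (tau n)⁻¹ = σ⁻¹ ∧
  ∀ c ∈ σ.cycleFactorsFinset, tau n * c⁻¹ * tau n ≠ c

/-- `σ ∈ B_λ~`: `σ ∈ Bₙ~` and its cycles form pairs of `τ`-symmetric cycles whose lengths
are the parts of `λ`; equivalently its cycle type consists of each part `≥ 2` of `λ`
repeated twice (parts equal to `1` correspond to pairs of fixed points). -/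
def InTwistedClass (n : ℕ) (lam : Multiset ℕ) (σ : Equiv.Perm (Fin (2 * n))) : Prop :=
  TwistedNoSelfSym n σ ∧
  σ.cycleType = Multiset.filter (2 ≤ ·) lam + Multiset.filter (2 ≤ ·) lam

/-!
Let `σ ∈ Bₙ~` act on `α = Fin (2n)`. Since `τ σ τ⁻¹ = σ⁻¹`, `τ` maps cycles of `σ` to cycles,
by hypothesis none to itself. Choosing one cycle from each pair `C, τ C` gives a `σ`-invariant set
`S` with `α = S ⊔ τ S`, and `S ⊕ S ≃ α`, `(s, s') ↦ (s, τ s')` turns `τ` into the swap and `σ`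
into `ρ ⊕ ρ⁻¹`, where `ρ = σ|_S`. Hence the cycle type of `σ` is twice that of `ρ`. If `σ'` has
the same cycle type, `ρ` and `ρ'` are conjugate by some `h : S ≃ S'`, and `h ⊕ h`, which commutes
with the swap, conjugates `σ` to `σ'` and `τ` to itself.
-/

namespace Equiv.Perm

section CycleType

variable {α β : Type*} [Fintype α] [DecidableEq α] [Fintype β] [DecidableEq β]

theorem cycleType_permCongr (e : α ≃ β) (σ : Perm α) :
    (e.permCongr σ).cycleType = σ.cycleType :=
  cycleType_extendDomain (e.trans (subtypeUnivEquiv fun _ => trivial).symm)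

theorem cycleType_sumCongr_one (σ : Perm α) :
    (sumCongr σ (1 : Perm β)).cycleType = σ.cycleType := by
  rw [← cycleType_extendDomain (p := fun z : α ⊕ β => z.isLeft) sumIsLeft.symm]
  congr 1
  ext (a | b)
  · exact (extendDomain_apply_image σ sumIsLeft.symm a).symm
  · simp [extendDomain_apply_not_subtype]

theorem cycleType_sumCongr (σ : Perm α) (τ : Perm β) :
    (sumCongr σ τ).cycleType = σ.cycleType + τ.cycleType := by
  have hd : Disjoint (sumCongr σ 1) (sumCongr 1 τ) := by
    rintro (a | b) <;> simp
  have hswap : (sumComm β α).permCongr (sumCongr τ 1) = sumCongr 1 τ := by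
    ext (a | b) <;> simp
  rw [← mul_one σ, ← one_mul τ, ← sumCongr_mul, hd.cycleType_mul, ← hswap, cycleType_permCongr,
    cycleType_sumCongr_one, cycleType_sumCongr_one, mul_one, one_mul]

theorem exists_permCongr_eq_of_cycleType_eq {σ : Perm α} {τ : Perm β}
    (hcard : Fintype.card α = Fintype.card β) (h : σ.cycleType = τ.cycleType) :
    ∃ e : α ≃ β, e.permCongr σ = τ := by
  let e₀ := Fintype.equivOfCardEq hcard
  obtain ⟨g, hg⟩ := isConj_iff.mp <| isConj_iff_cycleType_eq.mpr <|
    (cycleType_permCongr e₀ σ).trans h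
  exact ⟨e₀.trans g, by rw [← hg, ← permCongr_eq_mul]; ext; simp⟩

theorem cycleOf_conj (σ τ : Perm α) (a : α) :
    (τ * σ * τ⁻¹).cycleOf (τ a) = τ * σ.cycleOf a * τ⁻¹ := by
  ext x
  simp only [cycleOf_apply, sameCycle_conj, coe_mul, Function.comp_apply, coe_inv, symm_apply_apply]
  split_ifs <;> simp

end CycleType

end Equiv.Perm

section Twisted

variable {α : Type*} {σ τ : Perm α}

theorem sameCycle_apply_apply_iff_of_conj_eq_inv (hσ : τ * σ * τ⁻¹ = σ⁻¹) {a b : α} :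
    σ.SameCycle (τ a) (τ b) ↔ σ.SameCycle a b := by
  rw [← sameCycle_inv, ← hσ, sameCycle_conj]
  simp only [coe_inv, symm_apply_apply]

theorem conj_inv_eq_of_conj_eq_inv (hσ : τ * σ * τ⁻¹ = σ⁻¹) : τ * σ⁻¹ * τ⁻¹ = σ :=
  calc τ * σ⁻¹ * τ⁻¹ = (τ * σ * τ⁻¹)⁻¹ := by group
    _ = σ := by rw [hσ, inv_inv]

theorem apply_inv_apply_of_conj_eq_inv (hσ : τ * σ * τ⁻¹ = σ⁻¹) (a : α) :
    τ (σ⁻¹ a) = σ (τ a) := by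
  simpa using congrArg (· (τ a)) (conj_inv_eq_of_conj_eq_inv hσ)

theorem exists_invariant_transversal_of_conj_eq_inv (hτ : Function.Involutive τ)
    (hσ : τ * σ * τ⁻¹ = σ⁻¹) (hsep : ∀ a, ¬ σ.SameCycle a (τ a)) :
    ∃ S : Set α, (∀ a, σ a ∈ S ↔ a ∈ S) ∧ ∀ a, τ a ∈ S ↔ a ∉ S := by
  let _ : LinearOrder α := IsWellOrder.linearOrder WellOrderingRel
  -- `m a` is a chosen point of the cycle of `a`; from each pair of cycles `C, τ C` the set
  -- keeps the one whose chosen point is smaller.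
  let m : α → α := fun a => (Quotient.mk (SameCycle.setoid σ) a).out
  have hm : ∀ a b, m a = m b ↔ σ.SameCycle a b := fun _ _ => Quotient.out_inj.trans Quotient.eq
  refine ⟨{a | m a < m (τ a)}, fun a => ?_, fun a => ?_⟩
  · have hσa : m (σ a) = m a := (hm _ _).2 (sameCycle_apply_left.2 (SameCycle.refl _ _))
    have hτσa : m (τ (σ a)) = m (τ a) := by
      rw [hm, sameCycle_apply_apply_iff_of_conj_eq_inv hσ, ← hm, hσa]
    simp only [Set.mem_ofPred_eq, hσa, hτσa]
  · have hne : m a ≠ m (τ a) := fun h => hsep a ((hm _ _).1 h)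
    simp only [Set.mem_ofPred_eq, hτ a, not_lt]
    exact ⟨le_of_lt, fun h => lt_of_le_of_ne h hne.symm⟩

theorem exists_permCongr_sumCongr_eq (hτ : Function.Involutive τ)
    (hσ : τ * σ * τ⁻¹ = σ⁻¹) (hsep : ∀ a, ¬ σ.SameCycle a (τ a)) :
    ∃ (S : Set α) (ρ : Perm S) (e : S ⊕ S ≃ α),
      e.permCongr (sumComm S S) = τ ∧ e.permCongr (Perm.sumCongr ρ ρ⁻¹) = σ := by
  classical
  obtain ⟨S, hσS, hτS⟩ := exists_invariant_transversal_of_conj_eq_inv hτ hσ hsep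
  let e : S ⊕ S ≃ α :=
    (Equiv.sumCongr (Equiv.refl S) (τ.subtypeEquiv fun a => by simp [hτS a])).trans
      (Set.sumCompl S)
  refine ⟨S, σ.subtypePerm hσS, e, ?_, ?_⟩ <;> ext a <;> obtain ⟨s | s, rfl⟩ := e.surjective a <;>
    simp only [permCongr_apply, symm_apply_apply] <;>
    simp [e, hτ _, ← apply_inv_apply_of_conj_eq_inv hσ]

section Finite

variable [Fintype α] [DecidableEq α]

theorem not_sameCycle_apply_self_of_conj_eq_inv (hτ : ∀ a, τ a ≠ a) (hσ : τ * σ * τ⁻¹ = σ⁻¹)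
    (hc : ∀ c ∈ σ.cycleFactorsFinset, τ * c⁻¹ * τ⁻¹ ≠ c) (a : α) : ¬ σ.SameCycle a (τ a) := by
  intro hsame
  have hfix : σ a ≠ a := fun hfix => hτ a (hsame.eq_of_left hfix).symm
  refine hc _ (cycleOf_mem_cycleFactorsFinset_iff.mpr (mem_support.mpr hfix)) ?_
  have h := cycleOf_conj σ⁻¹ τ a
  rw [conj_inv_eq_of_conj_eq_inv hσ, hsame.symm.cycleOf_eq] at h
  rw [cycleOf_inv]
  -- the two sides carry different `DecidableRel` instances
  convert h.symm

theorem exists_commute_conj_eq_of_cycleType_eq {σ' : Perm α} (hτ : Function.Involutive τ)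
    (hσ : τ * σ * τ⁻¹ = σ⁻¹) (hσ' : τ * σ' * τ⁻¹ = σ'⁻¹)
    (hsep : ∀ a, ¬ σ.SameCycle a (τ a)) (hsep' : ∀ a, ¬ σ'.SameCycle a (τ a))
    (hct : σ.cycleType = σ'.cycleType) :
    ∃ x : Perm α, Commute x τ ∧ x * σ * x⁻¹ = σ' := by
  classical
  obtain ⟨S, ρ, e, heτ, heσ⟩ := exists_permCongr_sumCongr_eq hτ hσ hsep
  obtain ⟨S', ρ', e', heτ', heσ'⟩ := exists_permCongr_sumCongr_eq hτ hσ' hsep'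
  have hcard : Fintype.card S = Fintype.card S' := by
    have := Fintype.card_congr (e.trans e'.symm)
    simp only [Fintype.card_sum] at this
    omega
  have hρ : ρ.cycleType = ρ'.cycleType := by
    rw [← heσ, ← heσ', cycleType_permCongr, cycleType_permCongr, cycleType_sumCongr,
      cycleType_sumCongr, cycleType_inv, cycleType_inv] at hct
    simpa [← two_nsmul] using hct
  obtain ⟨h, rfl⟩ := exists_permCongr_eq_of_cycleType_eq hcard hρ
  let x : Perm α := (e.symm.trans (Equiv.sumCongr h h)).trans e'
  have hx : ∀ p, x * e.permCongr p * x⁻¹ = e'.permCongr ((Equiv.sumCongr h h).permCongr p) := by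
    intro p; ext; simp [x]
  refine ⟨x, mul_inv_eq_iff_eq_mul.mp ?_, ?_⟩
  · calc x * τ * x⁻¹ = x * e.permCongr (sumComm S S) * x⁻¹ := by rw [heτ]
      _ = e'.permCongr (sumComm S' S') := by rw [hx]; congr 1; ext (s | s) <;> simp
      _ = τ := heτ'
  · rw [← heσ, hx, ← heσ']
    congr 1
    ext (s | s) <;> rfl

end Finite

end Twisted

theorem tau_involutive (n : ℕ) : Function.Involutive (tau n) := (tau n).left_inv

theorem tau_inv (n : ℕ) : (tau n)⁻¹ = tau n := Equiv.ext fun _ => rfl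

theorem tau_apply_ne {n : ℕ} (a : Fin (2 * n)) : tau n a ≠ a := by
  rcases a with ⟨v, hv⟩
  by_cases h : v < n <;> simp [tau, h, Fin.ext_iff] <;> omega

theorem TwistedNoSelfSym.conj {n : ℕ} {σ x : Perm (Fin (2 * n))} (hσ : TwistedNoSelfSym n σ)
    (hx : x ∈ Subgroup.centralizer {tau n}) : TwistedNoSelfSym n (x * σ * x⁻¹) := by
  obtain ⟨hinv, hcyc⟩ := hσ
  have hxτ : x * tau n * x⁻¹ = tau n :=
    mul_inv_eq_of_eq_mul (Subgroup.mem_centralizer_singleton_iff.mp hx)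
  have hconj : ∀ p, x * (tau n * p * tau n) * x⁻¹ = tau n * (x * p * x⁻¹) * tau n := by
    intro p
    conv_rhs => rw [← hxτ]
    group
  rw [tau_inv] at hinv
  refine ⟨?_, fun c hc hsym => hcyc (x⁻¹ * c * x) ?_ ?_⟩
  · rw [tau_inv, ← hconj, hinv]
    group
  · simpa [mul_assoc] using (mem_cycleFactorsFinset_conj (x * σ * x⁻¹) x⁻¹ c).mpr hc
  · have h := hconj (x⁻¹ * c * x)⁻¹
    rw [show x * (x⁻¹ * c * x)⁻¹ * x⁻¹ = c⁻¹ by group, hsym] at h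
    calc tau n * (x⁻¹ * c * x)⁻¹ * tau n
        = x⁻¹ * (x * (tau n * (x⁻¹ * c * x)⁻¹ * tau n) * x⁻¹) * x := by group
      _ = x⁻¹ * c * x := by rw [h]

theorem TwistedNoSelfSym.not_sameCycle {n : ℕ} {σ : Perm (Fin (2 * n))}
    (hσ : TwistedNoSelfSym n σ) (a : Fin (2 * n)) : ¬ σ.SameCycle a (tau n a) :=
  not_sameCycle_apply_self_of_conj_eq_inv tau_apply_ne hσ.1 (by simpa only [tau_inv] using hσ.2) a

/-- `Bₙ~` is invariant under conjugation by the centralizer `Bₙ` of `τ`, and for each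
partition `λ` of `n` the subset `B_λ~` is a single `Bₙ`-conjugacy orbit. -/
theorem twisted_class_single_orbit (n : ℕ) (P : Nat.Partition n) :
    (∀ x ∈ Subgroup.centralizer {tau n}, ∀ σ : Equiv.Perm (Fin (2 * n)),
      TwistedNoSelfSym n σ → TwistedNoSelfSym n (x * σ * x⁻¹)) ∧
    (∀ x ∈ Subgroup.centralizer {tau n}, ∀ σ : Equiv.Perm (Fin (2 * n)),
      InTwistedClass n P.parts σ → InTwistedClass n P.parts (x * σ * x⁻¹)) ∧
    (∀ σ σ' : Equiv.Perm (Fin (2 * n)),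
      InTwistedClass n P.parts σ → InTwistedClass n P.parts σ' →
      ∃ x ∈ Subgroup.centralizer {tau n}, x * σ * x⁻¹ = σ') := by
  refine ⟨fun x hx σ hσ => hσ.conj hx,
    fun x hx σ hσ => ⟨hσ.1.conj hx, cycleType_conj.trans hσ.2⟩, fun σ σ' hσ hσ' => ?_⟩
  obtain ⟨x, hxτ, hx⟩ := exists_commute_conj_eq_of_cycleType_eq (tau_involutive n) hσ.1.1 hσ'.1.1
    hσ.1.not_sameCycle hσ'.1.not_sameCycle (hσ.2.trans hσ'.2.symm)
  exact ⟨x, Subgroup.mem_centralizer_singleton_iff.mpr hxτ.eq, hx⟩
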